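/- arXiv:1208.3946 — 4 statements merged into one kernel-verified Lean document; each statement's English description precedes it below -/
import Mathlib

section
/- Let m be an odd integer with m ≥ 7, and let p' be the smallest odd prime that does not divide m. Then 5·p' < 3·m (i.e., p' < 0.6·m). -/
/-!
Every odd prime below `p'` divides `m`. For `p' ≥ 8` pick, by Bertrand's postulate, a prime
`q ≥ 7` with `q < p' ≤ 2q`; then `5q ∣ m`, so `3m ≥ 15q ≥ 7.5 p'`. The cases `p' ≤ 7` only
involve the divisors `3` and `5` and the parity of `m`.
-/

theorem Nat.exists_prime_lt_and_le_two_mul_of_eight_le {n : ℕ} (hn : 8 ≤ n) :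
    ∃ q, q.Prime ∧ 7 ≤ q ∧ q < n ∧ n ≤ 2 * q := by
  rcases lt_or_ge n 14 with hlt | hge
  · exact ⟨7, by norm_num, le_rfl, by omega, by omega⟩
  · obtain ⟨q, hq, hlo, hhi⟩ := Nat.exists_prime_lt_and_le_two_mul ((n - 1) / 2) (by omega)
    exact ⟨q, hq, by omega, by omega, by omega⟩

theorem Nat.five_mul_lt_three_mul_of_prime_dvd {m n q : ℕ} (hm : m ≠ 0) (hq : q.Prime)
    (hq7 : 7 ≤ q) (hqm : q ∣ m) (h5m : 5 ∣ m) (hn : n ≤ 2 * q) : 5 * n < 3 * m := by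
  have hcop : Nat.Coprime 5 q := (Nat.coprime_primes (by norm_num) hq).mpr (by omega)
  have : 5 * q ≤ m := Nat.le_of_dvd (Nat.pos_of_ne_zero hm) (hcop.mul_dvd_of_dvd_of_dvd h5m hqm)
  omega

theorem Nat.five_mul_lt_three_mul_of_odd_primes_lt_dvd {m n : ℕ} (hm_odd : Odd m) (hm : 7 ≤ m)
    (hdvd : ∀ q, q.Prime → Odd q → q < n → q ∣ m) : 5 * n < 3 * m := by
  have h3 (hn : 3 < n) : 3 ∣ m := hdvd 3 Nat.prime_three (by decide) hn
  have h5 (hn : 5 < n) : 5 ∣ m := hdvd 5 Nat.prime_five (by decide) hn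
  rcases lt_or_ge n 8 with hlt | hge
  · obtain ⟨k, rfl⟩ := hm_odd
    by_cases hn3 : n ≤ 3
    · omega
    by_cases hn5 : n ≤ 5
    · have := h3 (by omega)
      omega
    · have := h3 (by omega)
      have := h5 (by omega)
      omega
  · obtain ⟨q, hq, hq7, hqn, hnq⟩ := Nat.exists_prime_lt_and_le_two_mul_of_eight_le hge
    have hqm : q ∣ m := hdvd q hq (hq.odd_of_ne_two (by omega)) hqn
    exact Nat.five_mul_lt_three_mul_of_prime_dvd (by omega) hq hq7 hqm (h5 (by omega)) hnq

theorem smallest_odd_prime_not_dividing_lt_general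
    (m p' : ℕ) (hm_odd : Odd m) (hm : 7 ≤ m)
    (hp_min : ∀ q : ℕ, Nat.Prime q → Odd q → ¬ q ∣ m → p' ≤ q) :
    5 * p' < 3 * m :=
  Nat.five_mul_lt_three_mul_of_odd_primes_lt_dvd hm_odd hm fun q hq hq_odd hqp =>
    not_not.mp fun hndvd => (hp_min q hq hq_odd hndvd).not_gt hqp

/-- Let `m` be an odd integer with `m ≥ 7`, and let `p'` be the smallest odd prime
that does not divide `m`. Then `5·p' < 3·m` (i.e., `p' < 0.6·m`). -/
theorem smallest_odd_prime_not_dividing_lt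
    (m p' : ℕ) (hm_odd : Odd m) (hm : 7 ≤ m)
    (hp_prime : Nat.Prime p') (hp_odd : Odd p') (hp_ndvd : ¬ p' ∣ m)
    (hp_min : ∀ q : ℕ, Nat.Prime q → Odd q → ¬ q ∣ m → p' ≤ q) :
    5 * p' < 3 * m :=
  smallest_odd_prime_not_dividing_lt_general m p' hm_odd hm hp_min
end

section
/- Let m be an odd integer with m ≥ 7, let p' be the smallest odd prime not dividing m, and let t' be the smallest positive integer that is coprime to m and satisfies 2·t' > m + 1. Then 2·t' = m + p'. -/
/-!
Write `m + p' = 2k`. A common prime factor of `k` and `m` would divide `2k - m = p'`, so `k` is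
coprime to `m`, and `t' ≤ k` by minimality of `t'`. Conversely `d = 2t' - m` is odd and `> 1`;
an odd prime factor `q` of `d` that divided `m` would divide `2t' = m + d`, hence `t'`, which is
impossible. So `q ∤ m`, and minimality of `p'` gives `p' ≤ q ≤ d`, i.e. `m + p' ≤ 2t'`.
-/

namespace Nat

theorem coprime_of_mul_eq_add {a k m n : ℕ} (hn : n.Coprime m) (h : a * k = m + n) :
    k.Coprime m := by
  have hgcd_dvd_n : k.gcd m ∣ n :=
    (Nat.dvd_add_right (gcd_dvd_right k m)).mp (h ▸ (gcd_dvd_left k m).mul_left a)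
  exact eq_one_of_dvd_one (hn ▸ dvd_gcd hgcd_dvd_n (gcd_dvd_right k m))

theorem eq_one_of_odd_of_dvd_of_two_mul_eq_add {d m q t : ℕ} (ht : t.Coprime m)
    (h : 2 * t = m + d) (hq : Odd q) (hqd : q ∣ d) (hqm : q ∣ m) : q = 1 := by
  have hq_two_mul : q ∣ 2 * t := h ▸ dvd_add hqm hqd
  exact eq_one_of_dvd_one (ht ▸ dvd_gcd (hq.coprime_two_right.dvd_of_dvd_mul_left hq_two_mul) hqm)

theorem add_le_two_mul_of_coprime {m p t : ℕ} (hm : Odd m)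
    (hp_min : ∀ q : ℕ, q.Prime → Odd q → ¬ q ∣ m → p ≤ q) (ht : t.Coprime m)
    (hgt : m + 1 < 2 * t) : m + p ≤ 2 * t := by
  obtain ⟨d, hd⟩ : ∃ d, 2 * t = m + d := ⟨2 * t - m, by omega⟩
  have hd_odd : Odd d := by
    obtain ⟨a, rfl⟩ := hm
    exact ⟨t - a - 1, by omega⟩
  have hq_prime : d.minFac.Prime := minFac_prime (by omega)
  have hq_odd : Odd d.minFac := hd_odd.of_dvd_nat d.minFac_dvd
  have hp_le_q : p ≤ d.minFac := hp_min _ hq_prime hq_odd fun hqm =>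
    hq_prime.ne_one (eq_one_of_odd_of_dvd_of_two_mul_eq_add ht hd hq_odd d.minFac_dvd hqm)
  have hq_le_d : d.minFac ≤ d := minFac_le (by omega)
  omega

end Nat

theorem two_mul_least_coprime_eq_add_smallest_odd_prime_general
    (m p' t' : ℕ) (hm_odd : Odd m)
    (hp_prime : Nat.Prime p') (hp_odd : Odd p') (hp_ndvd : ¬ p' ∣ m)
    (hp_min : ∀ q : ℕ, Nat.Prime q → Odd q → ¬ q ∣ m → p' ≤ q)
    (ht_cop : Nat.Coprime t' m) (ht_gt : m + 1 < 2 * t')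
    (ht_min : ∀ t : ℕ, 0 < t → Nat.Coprime t m → m + 1 < 2 * t → t' ≤ t) :
    2 * t' = m + p' := by
  have hp_three_le : 3 ≤ p' := by
    obtain ⟨c, rfl⟩ := hp_odd
    have := hp_prime.two_le
    omega
  obtain ⟨k, hk⟩ := hm_odd.add_odd hp_odd
  have hk_cop : k.Coprime m :=
    Nat.coprime_of_mul_eq_add (hp_prime.coprime_iff_not_dvd.mpr hp_ndvd) (a := 2) (by omega)
  have ht_le_k : t' ≤ k := ht_min k (by omega) hk_cop (by omega)
  have hp_le : m + p' ≤ 2 * t' := Nat.add_le_two_mul_of_coprime hm_odd hp_min ht_cop ht_gt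
  omega

/-- Let `m` be an odd integer with `m ≥ 7`, let `p'` be the smallest odd prime not
dividing `m`, and let `t'` be the smallest positive integer coprime to `m` with
`2·t' > m + 1`. Then `2·t' = m + p'`. -/
theorem two_mul_least_coprime_eq_add_smallest_odd_prime
    (m p' t' : ℕ) (hm_odd : Odd m) (hm : 7 ≤ m)
    (hp_prime : Nat.Prime p') (hp_odd : Odd p') (hp_ndvd : ¬ p' ∣ m)
    (hp_min : ∀ q : ℕ, Nat.Prime q → Odd q → ¬ q ∣ m → p' ≤ q)
    (ht_pos : 0 < t') (ht_cop : Nat.Coprime t' m) (ht_gt : m + 1 < 2 * t')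
    (ht_min : ∀ t : ℕ, 0 < t → Nat.Coprime t m → m + 1 < 2 * t → t' ≤ t) :
    2 * t' = m + p' :=
  two_mul_least_coprime_eq_add_smallest_odd_prime_general m p' t' hm_odd hp_prime hp_odd hp_ndvd
    hp_min ht_cop ht_gt ht_min
end

section
/- Let m be an integer with m > 6, and let t be the smallest positive integer such that 2·t > m and t is coprime to m. Then 2·t ≤ m + 4 (i.e., t − m/2 ≤ 2) and t < m − 1. -/
/-! By minimality `t` is at most any `s` with `m < 2 * s` coprime to `m`, and depending on
`m mod 4` one of `(m + 1) / 2`, `m / 2 + 1`, `m / 2 + 2` is such an `s`: if `2 * s = m + d` then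
`gcd s m` divides both `s` and `d`, where `d ∈ {1, 2, 4}` and `s` is odd whenever `d` is even. -/

theorem Nat.Coprime.of_mul_eq_add {a s m d : ℕ} (h : a * s = m + d) (hsd : Nat.Coprime s d) :
    Nat.Coprime s m := by
  have hgd : Nat.gcd s m ∣ d :=
    (Nat.dvd_add_right (Nat.gcd_dvd_right s m)).mp
      (h ▸ Dvd.dvd.mul_left (Nat.gcd_dvd_left s m) a)
  exact Nat.eq_one_of_dvd_one (hsd.gcd_eq_one ▸ Nat.dvd_gcd (Nat.gcd_dvd_left s m) hgd)

theorem Nat.exists_coprime_two_mul_mem_Ioc (m : ℕ) :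
    ∃ s, m < 2 * s ∧ 2 * s ≤ m + 4 ∧ Nat.Coprime s m := by
  obtain hodd | h0 | h2 : m % 2 = 1 ∨ m % 4 = 0 ∨ m % 4 = 2 := by omega
  · refine ⟨(m + 1) / 2, by omega, by omega, ?_⟩
    exact Nat.Coprime.of_mul_eq_add (a := 2) (d := 1) (by omega) (Nat.coprime_one_right _)
  · refine ⟨m / 2 + 1, by omega, by omega, ?_⟩
    refine Nat.Coprime.of_mul_eq_add (a := 2) (d := 2) (by omega) ?_
    exact Odd.coprime_two_right (Nat.odd_iff.mpr (by omega))
  · refine ⟨m / 2 + 2, by omega, by omega, ?_⟩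
    refine Nat.Coprime.of_mul_eq_add (a := 2) (d := 2 ^ 2) (by omega) (Nat.Coprime.pow_right 2 ?_)
    exact Odd.coprime_two_right (Nat.odd_iff.mpr (by omega))

theorem least_coprime_bounds_general
    (m t : ℕ) (hm : 6 < m)
    (ht_min : ∀ s : ℕ, 0 < s → m < 2 * s → Nat.Coprime s m → t ≤ s) :
    2 * t ≤ m + 4 ∧ t < m - 1 := by
  obtain ⟨s, hms, hsm, hcop⟩ := Nat.exists_coprime_two_mul_mem_Ioc m
  have hts := ht_min s (by omega) hms hcop
  omega

/-- Let `m > 6` and let `t` be the smallest positive integer with `2·t > m` that is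
coprime to `m`. Then `2·t ≤ m + 4` (i.e. `t − m/2 ≤ 2`) and `t < m − 1`. -/
theorem least_coprime_bounds
    (m t : ℕ) (hm : 6 < m)
    (ht_pos : 0 < t) (ht_gt : m < 2 * t) (ht_cop : Nat.Coprime t m)
    (ht_min : ∀ s : ℕ, 0 < s → m < 2 * s → Nat.Coprime s m → t ≤ s) :
    2 * t ≤ m + 4 ∧ t < m - 1 :=
  least_coprime_bounds_general m t hm ht_min
end

section
/- Let m be an odd integer with m ≥ 7, let t' be the smallest positive integer coprime to m with 2·t' > m + 1, and let k be an integer with k > 36 such that 1000·(2·m + 1) < 1144·k (i.e., p = 2m+1 satisfies p < 1.144·k). Then 2·t' + 2 < k. -/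
/-!
If `q` is an odd number coprime to the odd number `m`, then `(m + q) / 2` is coprime to `m`
and exceeds `(m + 1) / 2`, so `2 t' ≤ m + q`. Take for `q` the least odd prime not dividing `m`,
so that every odd prime below `q` divides `m`. For `q ≥ 7`, Bertrand's postulate supplies such
a prime `p > q / 2`, and `3 p ∣ m` gives `3 (q + 1) ≤ 2 m`; for `q = 3, 5` this is checked
directly. Hence `2 t' + 2 ≤ m + q + 2 ≤ 5 m / 3 + 1`, which is below `1000 (2 m + 1) / 1144 < k`.
-/

theorem Nat.coprime_add_div_two_of_odd {m q : ℕ} (hm : Odd m) (hq : Odd q) (h : q.Coprime m) :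
    ((m + q) / 2).Coprime m := by
  have hsum : (m + q).Coprime m := by
    rwa [Nat.add_comm, Nat.coprime_add_self_left]
  have htwice : 2 * ((m + q) / 2) = m + q :=
    Nat.two_mul_div_two_of_even (hm.add_odd hq)
  rw [← htwice] at hsum
  exact hsum.coprime_dvd_left (dvd_mul_left _ 2)

theorem three_mul_succ_le_two_mul_of_odd_primes_lt_dvd {m q : ℕ} (hm : m ≠ 0) (hq : q.Prime)
    (hq7 : 7 ≤ q) (hdvd : ∀ p, p.Prime → 2 < p → p < q → p ∣ m) :
    3 * (q + 1) ≤ 2 * m := by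
  obtain ⟨p, hp, hp_gt, hp_le⟩ := Nat.exists_prime_lt_and_le_two_mul ((q - 1) / 2) (by omega)
  have hqodd : q % 2 = 1 := Nat.odd_iff.mp (hq.odd_of_ne_two (by omega))
  have hcop : Nat.Coprime 3 p := (Nat.coprime_primes Nat.prime_three hp).2 (by omega)
  have h3p : 3 * p ∣ m :=
    hcop.mul_dvd_of_dvd_of_dvd (hdvd 3 Nat.prime_three (by omega) (by omega))
      (hdvd p hp (by omega) (by omega))
  have := Nat.le_of_dvd (Nat.pos_of_ne_zero hm) h3p
  omega

theorem exists_odd_prime_not_dvd_three_mul_succ_le {m : ℕ} (hm_odd : Odd m) (hm : 7 ≤ m) :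
    ∃ q, q.Prime ∧ Odd q ∧ ¬ q ∣ m ∧ 3 * (q + 1) ≤ 2 * m := by
  have hex : ∃ q, q.Prime ∧ 2 < q ∧ ¬ q ∣ m := by
    obtain ⟨p, hmp, hp⟩ := Nat.exists_infinite_primes (m + 1)
    exact ⟨p, hp, by omega, fun hd => absurd (Nat.le_of_dvd (by omega) hd) (by omega)⟩
  obtain ⟨hq, hq2, hqm⟩ := Nat.find_spec hex
  have hdvd : ∀ p, p.Prime → 2 < p → p < Nat.find hex → p ∣ m :=
    fun p hp hp2 hlt => by_contra fun hpm => Nat.find_min hex hlt ⟨hp, hp2, hpm⟩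
  refine ⟨Nat.find hex, hq, hq.odd_of_ne_two (by omega), hqm, ?_⟩
  obtain ⟨r, rfl⟩ := hm_odd
  by_cases hq7 : 7 ≤ Nat.find hex
  · exact three_mul_succ_le_two_mul_of_odd_primes_lt_dvd (by omega) hq hq7 hdvd
  · interval_cases h : Nat.find hex
    · omega
    · exact absurd hq (by norm_num)
    · have := hdvd 3 Nat.prime_three (by omega) (by omega)
      omega
    · exact absurd hq (by norm_num)

theorem new_weight_lt_general
    (m t' k : ℕ) (hm_odd : Odd m) (hm : 7 ≤ m)
    (ht_min : ∀ t : ℕ, 0 < t → Nat.Coprime t m → m + 1 < 2 * t → t' ≤ t)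
    (hp : 1000 * (2 * m + 1) < 1144 * k) :
    2 * t' + 2 < k := by
  obtain ⟨q, hq, hq_odd, hqm, hq_le⟩ := exists_odd_prime_not_dvd_three_mul_succ_le hm_odd hm
  have hcop : ((m + q) / 2).Coprime m :=
    Nat.coprime_add_div_two_of_odd hm_odd hq_odd ((Nat.Prime.coprime_iff_not_dvd hq).2 hqm)
  have hm2 := Nat.odd_iff.mp hm_odd
  have hq2 := Nat.odd_iff.mp hq_odd
  have hq_ge := hq.two_le
  have ht' := ht_min ((m + q) / 2) (by omega) hcop (by omega)
  omega

/-- Let `m` be odd with `m ≥ 7`, let `t'` be the smallest positive integer coprime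
to `m` with `2·t' > m + 1`, and let `k > 36` with `1000·(2·m + 1) < 1144·k`
(i.e. `p = 2m + 1 < 1.144·k`). Then `2·t' + 2 < k`. -/
theorem new_weight_lt
    (m t' k : ℕ) (hm_odd : Odd m) (hm : 7 ≤ m)
    (ht_pos : 0 < t') (ht_cop : Nat.Coprime t' m) (ht_gt : m + 1 < 2 * t')
    (ht_min : ∀ t : ℕ, 0 < t → Nat.Coprime t m → m + 1 < 2 * t → t' ≤ t)
    (hk : 36 < k) (hp : 1000 * (2 * m + 1) < 1144 * k) :
    2 * t' + 2 < k :=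
  new_weight_lt_general m t' k hm_odd hm ht_min hp
end
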